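/- arXiv:1812.03403 — 6 statements merged into one kernel-verified Lean document; each statement's English description precedes it below -/
import Mathlib

section
/- If λ < λ_s := sqrt((k-1)^{k-1}/(k(k-2)^{k-2})), then h(q) = λ²k q^{k-1} - λ²k q^k - q is strictly negative for all q ∈ (0,1]. -/
/-- AM-GM step: for `q ∈ (0,1]`, `q^(k-2) * (1-q) ≤ (k-2)^(k-2)/(k-1)^(k-1)`. -/
lemma amgm_step (k : ℕ) (hk : 3 ≤ k) (q : ℝ) (hq0 : 0 < q) (hq1 : q ≤ 1) :
    q ^ (k - 2) * (1 - q) ≤ ((k : ℝ) - 2) ^ (k - 2) / ((k : ℝ) - 1) ^ (k - 1) := by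
  have hK : (3 : ℝ) ≤ (k : ℝ) := by exact_mod_cast hk
  have hK2 : (0 : ℝ) < (k : ℝ) - 2 := by linarith
  have hK1 : (0 : ℝ) < (k : ℝ) - 1 := by linarith
  set w₁ : ℝ := ((k : ℝ) - 2) / ((k : ℝ) - 1) with hw₁def
  set w₂ : ℝ := 1 / ((k : ℝ) - 1) with hw₂def
  have hw₁ : 0 ≤ w₁ := by positivity
  have hw₂ : 0 ≤ w₂ := by positivity
  have hp₁ : 0 ≤ q := hq0.le
  have hp₂ : 0 ≤ ((k : ℝ) - 2) * (1 - q) := by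
    apply mul_nonneg hK2.le; linarith
  have hw : w₁ + w₂ = 1 := by rw [hw₁def, hw₂def]; field_simp; ring
  have h1 := Real.geom_mean_le_arith_mean2_weighted hw₁ hw₂ hp₁ hp₂ hw
  have hsum : w₁ * q + w₂ * (((k : ℝ) - 2) * (1 - q)) = ((k : ℝ) - 2) / ((k : ℝ) - 1) := by
    rw [hw₁def, hw₂def]; field_simp; ring
  rw [hsum] at h1
  -- raise to the power (k-1)
  have h2 : (q ^ w₁ * (((k : ℝ) - 2) * (1 - q)) ^ w₂) ^ ((k : ℝ) - 1)
      ≤ (((k : ℝ) - 2) / ((k : ℝ) - 1)) ^ ((k : ℝ) - 1) := by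
    apply Real.rpow_le_rpow (by positivity) h1 hK1.le
  have hc2 : ((k - 2 : ℕ) : ℝ) = (k : ℝ) - 2 := by
    rw [Nat.cast_sub (by omega)]; norm_num
  have hc1 : ((k - 1 : ℕ) : ℝ) = (k : ℝ) - 1 := by
    rw [Nat.cast_sub (by omega)]; norm_num
  rw [Real.mul_rpow (by positivity) (by positivity), ← Real.rpow_mul hp₁,
    ← Real.rpow_mul hp₂,
    (show w₁ * ((k : ℝ) - 1) = (k : ℝ) - 2 by rw [hw₁def]; field_simp),
    (show w₂ * ((k : ℝ) - 1) = 1 by rw [hw₂def]; field_simp), Real.rpow_one] at h2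
  rw [show q ^ ((k : ℝ) - 2) = q ^ (k - 2 : ℕ) by rw [← hc2, Real.rpow_natCast],
    show (((k : ℝ) - 2) / ((k : ℝ) - 1)) ^ ((k : ℝ) - 1)
      = (((k : ℝ) - 2) / ((k : ℝ) - 1)) ^ (k - 1 : ℕ) by rw [← hc1, Real.rpow_natCast],
    div_pow] at h2
  have hpow : ((k : ℝ) - 2) ^ (k - 1) = ((k : ℝ) - 2) ^ (k - 2) * ((k : ℝ) - 2) := by
    rw [← pow_succ]; congr 1; omega
  rw [hpow] at h2
  calc q ^ (k - 2) * (1 - q) = (q ^ (k - 2) * (((k : ℝ) - 2) * (1 - q))) / ((k : ℝ) - 2) := by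
        field_simp
    _ ≤ (((k : ℝ) - 2) ^ (k - 2) * ((k : ℝ) - 2) / ((k : ℝ) - 1) ^ (k - 1)) / ((k : ℝ) - 2) := by
        gcongr
    _ = ((k : ℝ) - 2) ^ (k - 2) / ((k : ℝ) - 1) ^ (k - 1) := by
        field_simp

theorem stmt_2 (k : ℕ) (hk : 3 ≤ k) (lam : ℝ) (hlam : 0 < lam)
    (hlt : lam < Real.sqrt (((k : ℝ) - 1) ^ (k - 1) / ((k : ℝ) * ((k : ℝ) - 2) ^ (k - 2)))) :
    ∀ q ∈ Set.Ioc (0 : ℝ) 1,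
      lam ^ 2 * k * q ^ (k - 1) - lam ^ 2 * k * q ^ k - q < 0 := by
  intro q hq
  obtain ⟨hq0, hq1⟩ := hq
  have hK : (3 : ℝ) ≤ (k : ℝ) := by exact_mod_cast hk
  have hK2 : (0 : ℝ) < (k : ℝ) - 2 := by linarith
  have hK1 : (0 : ℝ) < (k : ℝ) - 1 := by linarith
  have hlam2 : lam ^ 2 < ((k : ℝ) - 1) ^ (k - 1) / ((k : ℝ) * ((k : ℝ) - 2) ^ (k - 2)) :=
    (Real.lt_sqrt hlam.le).mp hlt
  have key := amgm_step k hk q hq0 hq1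
  have e : lam ^ 2 * k * q ^ (k - 1) - lam ^ 2 * k * q ^ k - q
      = q * (lam ^ 2 * k * (q ^ (k - 2) * (1 - q)) - 1) := by
    have h1 : q ^ (k - 1) = q ^ (k - 2) * q := by rw [← pow_succ]; congr 1; omega
    have h2 : q ^ k = q ^ (k - 2) * q * q := by rw [← pow_succ, ← pow_succ]; congr 1; omega
    rw [h1, h2]; ring
  rw [e]
  apply mul_neg_of_pos_of_neg hq0
  rw [sub_neg]
  calc lam ^ 2 * k * (q ^ (k - 2) * (1 - q))
      ≤ lam ^ 2 * k * (((k : ℝ) - 2) ^ (k - 2) / ((k : ℝ) - 1) ^ (k - 1)) := by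
        apply mul_le_mul_of_nonneg_left key (by positivity)
    _ < 1 := by
        rw [show lam ^ 2 * k * (((k : ℝ) - 2) ^ (k - 2) / ((k : ℝ) - 1) ^ (k - 1))
            = (lam ^ 2 * ((k : ℝ) * ((k : ℝ) - 2) ^ (k - 2))) / ((k : ℝ) - 1) ^ (k - 1) by ring,
          div_lt_one (by positivity)]
        calc lam ^ 2 * ((k : ℝ) * ((k : ℝ) - 2) ^ (k - 2))
            < ((k : ℝ) - 1) ^ (k - 1) / ((k : ℝ) * ((k : ℝ) - 2) ^ (k - 2))
              * ((k : ℝ) * ((k : ℝ) - 2) ^ (k - 2)) := by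
              apply mul_lt_mul_of_pos_right hlam2 (by positivity)
          _ = ((k : ℝ) - 1) ^ (k - 1) := by field_simp
end

section
/- If λ > λ_s := sqrt((k-1)^{k-1}/(k(k-2)^{k-2})), then the polynomial h(q) = λ²k q^{k-1} - λ²k q^k - q has exactly two zeros q_u < q_s in (0,1), and these satisfy q_u < (k-2)/(k-1) < q_s. -/
/-!
Writing `k = n + 3`, one has `h q = q * (λ² k g(q) - 1)` with `g(q) = q^(n+1) (1 - q)`.
The profile `g` vanishes at `0` and `1`, increases strictly up to `(n+1)/(n+2) = (k-2)/(k-1)` and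
decreases strictly after it, and `λ > λ_s` says exactly that its maximum exceeds `1 / (λ² k)`.
So the level `1 / (λ² k)` is attained exactly once on each side of the maximum.
-/

open Set

theorem exists_pair_eq_of_strictMonoOn_of_strictAntiOn {g : ℝ → ℝ} {a b c y : ℝ}
    (hab : a ≤ b) (hbc : b ≤ c) (hg : ContinuousOn g (Icc a c))
    (hmono : StrictMonoOn g (Icc a b)) (hanti : StrictAntiOn g (Icc b c))
    (ha : g a < y) (hc : g c < y) (hb : y < g b) :
    ∃ u ∈ Ioo a b, ∃ v ∈ Ioo b c, g u = y ∧ g v = y ∧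
      ∀ x ∈ Icc a c, g x = y → x = u ∨ x = v := by
  obtain ⟨u, hu, hgu⟩ :=
    intermediate_value_Ioo hab (hg.mono (Icc_subset_Icc_right hbc)) ⟨ha, hb⟩
  obtain ⟨v, hv, hgv⟩ :=
    intermediate_value_Ioo' hbc (hg.mono (Icc_subset_Icc_left hab)) ⟨hc, hb⟩
  refine ⟨u, hu, v, hv, hgu, hgv, fun x ⟨hax, hxc⟩ hgx => ?_⟩
  rcases le_total x b with hxb | hbx
  · exact .inl <| hmono.injOn ⟨hax, hxb⟩ (Ioo_subset_Icc_self hu) (hgx.trans hgu.symm)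
  · exact .inr <| hanti.injOn ⟨hbx, hxc⟩ (Ioo_subset_Icc_self hv) (hgx.trans hgv.symm)

section Profile

variable (n : ℕ)

theorem hasDerivAt_pow_succ_mul_one_sub (q : ℝ) :
    HasDerivAt (fun q : ℝ => q ^ (n + 1) * (1 - q)) (q ^ n * ((n + 1) - (n + 2) * q)) q := by
  refine ((hasDerivAt_pow (n + 1) q).fun_mul ((hasDerivAt_id' q).const_sub 1)).congr_deriv ?_
  rw [Nat.add_sub_cancel]
  push_cast
  ring

theorem strictMonoOn_pow_succ_mul_one_sub :
    StrictMonoOn (fun q : ℝ => q ^ (n + 1) * (1 - q)) (Icc 0 ((n + 1 : ℝ) / (n + 2))) := by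
  refine strictMonoOn_of_hasDerivWithinAt_pos (convex_Icc _ _) (by fun_prop)
    (fun q _ => (hasDerivAt_pow_succ_mul_one_sub n q).hasDerivWithinAt) ?_
  rw [interior_Icc]
  rintro q ⟨hq0, hq⟩
  rw [lt_div_iff₀ (by positivity)] at hq
  exact mul_pos (pow_pos hq0 n) (by linarith)

theorem strictAntiOn_pow_succ_mul_one_sub :
    StrictAntiOn (fun q : ℝ => q ^ (n + 1) * (1 - q)) (Icc ((n + 1 : ℝ) / (n + 2)) 1) := by
  refine strictAntiOn_of_hasDerivWithinAt_neg (convex_Icc _ _) (by fun_prop)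
    (fun q _ => (hasDerivAt_pow_succ_mul_one_sub n q).hasDerivWithinAt) ?_
  rw [interior_Icc]
  rintro q ⟨hq, -⟩
  have hq0 : 0 < q := lt_trans (by positivity) hq
  rw [div_lt_iff₀ (by positivity)] at hq
  exact mul_neg_of_pos_of_neg (pow_pos hq0 n) (by linarith)

theorem inv_lt_pow_succ_mul_one_sub_of_sqrt_lt {lam : ℝ}
    (hlam : √((n + 2 : ℝ) ^ (n + 2) / ((n + 3) * (n + 1) ^ (n + 1))) < lam) :
    (lam ^ 2 * (n + 3))⁻¹ < ((n + 1 : ℝ) / (n + 2)) ^ (n + 1) * (1 - (n + 1) / (n + 2)) := by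
  have hlam0 : 0 < lam := (Real.sqrt_nonneg _).trans_lt hlam
  have hlevel0 : 0 < (lam ^ 2 * (n + 3))⁻¹ := by positivity
  have hmid1 : (n + 1 : ℝ) / (n + 2) < 1 := by rw [div_lt_one (by positivity)]; linarith
  rw [Real.sqrt_lt' hlam0, div_lt_iff₀ (by positivity)] at hlam
  have hmax : ((n + 1 : ℝ) / (n + 2)) ^ (n + 1) * (1 - (n + 1) / (n + 2))
      = (n + 1) ^ (n + 1) / (n + 2) ^ (n + 2) := by
    rw [div_pow, one_sub_div (by positivity), div_mul_div_comm, ← pow_succ]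
    ring
  rw [hmax, inv_lt_iff_one_lt_mul₀ (by positivity), div_mul_eq_mul_div, one_lt_div (by positivity)]
  linarith

end Profile

theorem stmt_3 (k : ℕ) (hk : 3 ≤ k) (lam : ℝ)
    (hlam : Real.sqrt (((k : ℝ) - 1) ^ (k - 1) / ((k : ℝ) * ((k : ℝ) - 2) ^ (k - 2))) < lam)
    (h : ℝ → ℝ) (hh : h = fun q : ℝ => lam ^ 2 * k * q ^ (k - 1) - lam ^ 2 * k * q ^ k - q) :
    ∃ qu qs : ℝ, qu ∈ Set.Ioo (0 : ℝ) 1 ∧ qs ∈ Set.Ioo (0 : ℝ) 1 ∧ qu < qs ∧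
      h qu = 0 ∧ h qs = 0 ∧
      qu < ((k : ℝ) - 2) / ((k : ℝ) - 1) ∧ ((k : ℝ) - 2) / ((k : ℝ) - 1) < qs ∧
      ∀ q ∈ Set.Ioo (0 : ℝ) 1, h q = 0 → q = qu ∨ q = qs := by
  obtain ⟨n, rfl⟩ : ∃ n, k = n + 3 := ⟨k - 3, by omega⟩
  have hmid : ((↑(n + 3) : ℝ) - 2) / ((↑(n + 3) : ℝ) - 1) = (n + 1) / (n + 2) := by
    push_cast; ring
  have hlevel := inv_lt_pow_succ_mul_one_sub_of_sqrt_lt n (lam := lam) (by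
    convert hlam using 3 <;> push_cast <;> ring_nf)
  have hfactor : ∀ q, h q = q * (lam ^ 2 * (n + 3) * (q ^ (n + 1) * (1 - q)) - 1) := by
    intro q; subst hh; push_cast; ring
  have hlam0 : 0 < lam := (Real.sqrt_nonneg _).trans_lt hlam
  have hlevel0 : 0 < (lam ^ 2 * (n + 3))⁻¹ := by positivity
  have hmid1 : (n + 1 : ℝ) / (n + 2) < 1 := by rw [div_lt_one (by positivity)]; linarith
  have hroot : ∀ q ∈ Ioo (0 : ℝ) 1,
      h q = 0 ↔ q ^ (n + 1) * (1 - q) = (lam ^ 2 * (n + 3))⁻¹ := by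
    intro q hq
    rw [hfactor, mul_eq_zero, or_iff_right hq.1.ne', sub_eq_zero, mul_comm,
      mul_eq_one_iff_eq_inv₀ (by positivity)]
  obtain ⟨qu, hqu, qs, hqs, hgu, hgs, hunique⟩ :=
    exists_pair_eq_of_strictMonoOn_of_strictAntiOn (by positivity) hmid1.le (by fun_prop)
      (strictMonoOn_pow_succ_mul_one_sub n) (strictAntiOn_pow_succ_mul_one_sub n)
      (by simpa using hlevel0) (by simpa using hlevel0) hlevel
  have hqu' : qu ∈ Ioo (0 : ℝ) 1 := ⟨hqu.1, hqu.2.trans hmid1⟩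
  have hqs' : qs ∈ Ioo (0 : ℝ) 1 := ⟨(div_pos (by positivity) (by positivity)).trans hqs.1, hqs.2⟩
  rw [hmid]
  exact ⟨qu, qs, hqu', hqs', hqu.2.trans hqs.1, (hroot qu hqu').2 hgu, (hroot qs hqs').2 hgs,
    hqu.2, hqs.1, fun q hq hq0 => hunique q (Ioo_subset_Icc_self hq) ((hroot q hq).1 hq0)⟩
end

section
/- For λ < λ_s, the function f_λ(t) = λ²t^k + log(1-t) + t is strictly decreasing on [0,1). -/
/-!
With `n = k - 2`, the derivative of `f_λ` is `λ² k t ^ (n + 1) - t / (1 - t)`, which is negative on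
`(0, 1)` exactly when `λ² k t ^ n (1 - t) < 1`. By Bernoulli's inequality `t ^ n (1 - t)` is at most
`n ^ n / (n + 1) ^ (n + 1)` (its value at `t = n / (n + 1)`), and `λ < λ_s` says precisely that
`λ² k n ^ n < (n + 1) ^ (n + 1)`.
-/

open Real

theorem pow_mul_one_sub_le {R : Type*} [Field R] [LinearOrder R] [IsStrictOrderedRing R]
    (n : ℕ) {x : R} (hx : 0 ≤ x) : x ^ n * (1 - x) ≤ n ^ n / (n + 1) ^ (n + 1) := by
  rcases n.eq_zero_or_pos with rfl | hn
  · simpa using hx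
  have hn : (0 : R) < n := by exact_mod_cast hn
  -- Bernoulli's inequality `a ^ (n+1) + (n+1) a ^ n b ≤ (a + b) ^ (n+1)` at `a = (n+1) x`, `a + b = n`.
  have bernoulli := pow_add_mul_le_add_pow (a := (n + 1) * x) (b := n - (n + 1) * x)
    (by positivity) (by nlinarith) (n + 1)
  rw [le_div_iff₀ (by positivity), ← mul_le_mul_iff_right₀ hn]
  calc (n : R) * (x ^ n * (1 - x) * (n + 1) ^ (n + 1))
      = ((n + 1) * x) ^ (n + 1) + ((n + 1 : ℕ) : R) * ((n + 1) * x) ^ (n + 1 - 1)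
          * (n - (n + 1) * x) := by
        rw [Nat.add_sub_cancel, mul_pow, mul_pow]
        push_cast
        ring
    _ ≤ ((n + 1) * x + (n - (n + 1) * x)) ^ (n + 1) := bernoulli
    _ = n * n ^ n := by ring

theorem mul_pow_succ_lt_div_one_sub (n : ℕ) {c t : ℝ} (hc₀ : 0 ≤ c)
    (hc : c * n ^ n < (n + 1) ^ (n + 1)) (ht₀ : 0 < t) (ht₁ : t < 1) :
    c * t ^ (n + 1) < t / (1 - t) := by
  have hmax : c * (t ^ n * (1 - t)) < 1 :=
    calc c * (t ^ n * (1 - t)) ≤ c * (n ^ n / (n + 1) ^ (n + 1)) :=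
          mul_le_mul_of_nonneg_left (pow_mul_one_sub_le n ht₀.le) hc₀
      _ < 1 := by rwa [← mul_div_assoc, div_lt_one (by positivity)]
  rw [lt_div_iff₀ (by linarith)]
  calc c * t ^ (n + 1) * (1 - t) = c * (t ^ n * (1 - t)) * t := by ring
    _ < 1 * t := by gcongr
    _ = t := one_mul t

theorem hasDerivAt_mul_pow_add_log_one_sub_add_self (c : ℝ) (k : ℕ) {t : ℝ} (ht : t < 1) :
    HasDerivAt (fun s => c * s ^ k + log (1 - s) + s) (c * k * t ^ (k - 1) - t / (1 - t)) t := by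
  have hlog : HasDerivAt (fun s => log (1 - s)) (-1 / (1 - t)) t := by
    simpa using ((hasDerivAt_id' t).const_sub 1).log (by linarith)
  refine ((((hasDerivAt_pow k t).const_mul c).add hlog).add (hasDerivAt_id' t)).congr_deriv ?_
  field_simp [show 1 - t ≠ 0 by linarith]
  ring

theorem stmt_4 (k : ℕ) (hk : 3 ≤ k) (lam : ℝ) (hlam : 0 < lam)
    (hlt : lam < Real.sqrt (((k : ℝ) - 1) ^ (k - 1) / ((k : ℝ) * ((k : ℝ) - 2) ^ (k - 2)))) :
    StrictAntiOn (fun t : ℝ => lam ^ 2 * t ^ k + Real.log (1 - t) + t)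
      (Set.Ico (0 : ℝ) 1) := by
  obtain ⟨n, rfl⟩ : ∃ n, k = n + 2 := ⟨k - 2, by omega⟩
  have hn : (0 : ℝ) < n := by exact_mod_cast (by omega : 0 < n)
  have hc : lam ^ 2 * (n + 2 : ℕ) * n ^ n < (n + 1) ^ (n + 1) := by
    have hsq := (Real.lt_sqrt hlam.le).mp hlt
    push_cast at hsq ⊢
    rw [show (n : ℝ) + 2 - 1 = n + 1 by ring, show (n : ℝ) + 2 - 2 = n by ring] at hsq
    rwa [lt_div_iff₀ (by positivity), ← mul_assoc] at hsq
  have hderiv : ∀ t ∈ Set.Ico (0 : ℝ) 1,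
      HasDerivAt (fun t : ℝ => lam ^ 2 * t ^ (n + 2) + Real.log (1 - t) + t)
        (lam ^ 2 * (n + 2 : ℕ) * t ^ (n + 1) - t / (1 - t)) t :=
    fun t ht => hasDerivAt_mul_pow_add_log_one_sub_add_self _ _ ht.2
  refine strictAntiOn_of_hasDerivWithinAt_neg (convex_Ico 0 1)
    (fun t ht => (hderiv t ht).continuousAt.continuousWithinAt)
    (fun t ht => (hderiv t (interior_subset ht)).hasDerivWithinAt) fun t ht => ?_
  rw [interior_Ico] at ht
  linarith [mul_pow_succ_lt_div_one_sub n (by positivity) hc ht.1 ht.2]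
end

section
/- For λ > λ_s, the function f_λ has a strict local minimum at q_u(λ) and a strict local maximum at q_s(λ), where q_u and q_s are the two zeros of h(q) = λ²k q^{k-1} - λ²k q^k - q in (0,1) with q_u < q_s, and f_λ is strictly monotone on each of the intervals (0,q_u), (q_u,q_s), (q_s,1). -/
/-! Here `f' = h / (1 - t)` and `h q = q * (λ² k q ^ (k - 2) (1 - q) - 1)`. The bump
`q ^ (k - 2) (1 - q)` vanishes at `0` and `1`, increases up to `(k - 2) / (k - 1)` and decreases
after it, and its maximum `(k - 2) ^ (k - 2) / (k - 1) ^ (k - 1)` exceeds `1 / (λ² k)` exactly when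
`λ > λ_s`. So it crosses that level at two points `q_u < q_s`, and `f'` is negative, positive,
negative on the three intervals they cut out of `(0, 1)`. -/

open Set

theorem exists_levelSet_of_unimodal {g : ℝ → ℝ} {a m b y : ℝ} (ham : a ≤ m) (hmb : m ≤ b)
    (hg : ContinuousOn g (Icc a b)) (hmono : StrictMonoOn g (Icc a m))
    (hanti : StrictAntiOn g (Icc m b)) (ha : g a < y) (hm : y < g m) (hb : g b < y) :
    ∃ u s, u ∈ Ioo a m ∧ s ∈ Ioo m b ∧ g u = y ∧ g s = y ∧
      (∀ t ∈ Ioo a u, g t < y) ∧ (∀ t ∈ Ioo u s, y < g t) ∧ (∀ t ∈ Ioo s b, g t < y) := by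
  obtain ⟨u, hu, hgu⟩ := intermediate_value_Ioo ham (hg.mono (Icc_subset_Icc_right hmb)) ⟨ha, hm⟩
  obtain ⟨s, hs, hgs⟩ := intermediate_value_Ioo' hmb (hg.mono (Icc_subset_Icc_left ham)) ⟨hb, hm⟩
  refine ⟨u, s, hu, hs, hgu, hgs, fun t ht => ?_, fun t ht => ?_, fun t ht => ?_⟩
  · exact hgu ▸ hmono ⟨ht.1.le, (ht.2.trans hu.2).le⟩ ⟨hu.1.le, hu.2.le⟩ ht.2
  · rcases le_or_gt t m with htm | hmt
    · exact hgu ▸ hmono ⟨hu.1.le, hu.2.le⟩ ⟨(hu.1.trans ht.1).le, htm⟩ ht.1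
    · exact hgs ▸ hanti ⟨hmt.le, (ht.2.trans hs.2).le⟩ ⟨hs.1.le, hs.2.le⟩ ht.2
  · exact hgs ▸ hanti ⟨hs.1.le, hs.2.le⟩ ⟨(hs.1.trans ht.1).le, ht.2.le⟩ ht.1

theorem exists_forall_lt_of_strictAntiOn_of_strictMonoOn {f : ℝ → ℝ} {a x b : ℝ}
    (hax : a < x) (hxb : x < b) (hanti : StrictAntiOn f (Ioc a x))
    (hmono : StrictMonoOn f (Ico x b)) :
    ∃ ε > 0, ∀ t, |t - x| < ε → t ≠ x → f x < f t := by
  refine ⟨min (x - a) (b - x), lt_min (sub_pos.2 hax) (sub_pos.2 hxb), fun t ht htx => ?_⟩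
  rw [lt_min_iff, abs_sub_lt_iff, abs_sub_lt_iff] at ht
  rcases htx.lt_or_gt with htx | hxt
  · exact hanti ⟨by linarith, htx.le⟩ ⟨hax, le_rfl⟩ htx
  · exact hmono ⟨le_rfl, hxb⟩ ⟨hxt.le, by linarith⟩ hxt

theorem exists_forall_lt_of_strictMonoOn_of_strictAntiOn {f : ℝ → ℝ} {a x b : ℝ}
    (hax : a < x) (hxb : x < b) (hmono : StrictMonoOn f (Ioc a x))
    (hanti : StrictAntiOn f (Ico x b)) :
    ∃ ε > 0, ∀ t, |t - x| < ε → t ≠ x → f t < f x := by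
  simpa using exists_forall_lt_of_strictAntiOn_of_strictMonoOn hax hxb hmono.neg hanti.neg

def bump (n : ℕ) (q : ℝ) : ℝ := q ^ n * (1 - q)

theorem continuous_bump (n : ℕ) : Continuous (bump n) := by
  unfold bump; fun_prop

theorem hasDerivAt_bump_succ (n : ℕ) (q : ℝ) :
    HasDerivAt (bump (n + 1)) (q ^ n * (n + 1 - (n + 2) * q)) q := by
  refine ((hasDerivAt_pow (n + 1) q).fun_mul ((hasDerivAt_id' q).const_sub 1)).congr_deriv ?_
  rw [Nat.add_sub_cancel]
  push_cast
  ring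

theorem strictMonoOn_bump_succ (n : ℕ) :
    StrictMonoOn (bump (n + 1)) (Icc 0 ((n + 1) / (n + 2))) := by
  refine strictMonoOn_of_deriv_pos (convex_Icc _ _) (continuous_bump _).continuousOn
    fun q hq => ?_
  rw [interior_Icc] at hq
  rw [(hasDerivAt_bump_succ n q).deriv]
  have : (n + 2) * q < n + 1 := by
    have := hq.2; rw [lt_div_iff₀ (by positivity)] at this; linarith
  exact mul_pos (pow_pos hq.1 n) (by linarith)

theorem strictAntiOn_bump_succ (n : ℕ) :
    StrictAntiOn (bump (n + 1)) (Ici ((n + 1) / (n + 2))) := by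
  refine strictAntiOn_of_deriv_neg (convex_Ici _) (continuous_bump _).continuousOn
    fun q hq => ?_
  rw [interior_Ici, mem_Ioi] at hq
  rw [(hasDerivAt_bump_succ n q).deriv]
  have : n + 1 < (n + 2) * q := by rwa [div_lt_iff₀' (by positivity)] at hq
  exact mul_neg_of_pos_of_neg (pow_pos (lt_trans (by positivity) hq) n) (by linarith)

theorem bump_div_succ (n : ℕ) : bump n (n / (n + 1)) = n ^ n / (n + 1) ^ (n + 1) := by
  unfold bump
  rw [div_pow, pow_succ]
  field_simp
  ring

noncomputable def potential (k : ℕ) (lam t : ℝ) : ℝ := lam ^ 2 * t ^ k + Real.log (1 - t) + t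

def criticalPoly (k : ℕ) (lam q : ℝ) : ℝ := lam ^ 2 * k * q ^ (k - 1) - lam ^ 2 * k * q ^ k - q

theorem hasDerivAt_potential (k : ℕ) (lam : ℝ) {t : ℝ} (ht : t < 1) :
    HasDerivAt (potential k lam) (criticalPoly k lam t / (1 - t)) t := by
  have h1t : 1 - t ≠ 0 := (sub_pos.2 ht).ne'
  have := (((hasDerivAt_pow k t).const_mul (lam ^ 2)).add
    ((Real.hasDerivAt_log h1t).comp t ((hasDerivAt_id' t).const_sub 1))).add (hasDerivAt_id' t)
  refine this.congr_deriv ?_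
  rw [eq_div_iff h1t, criticalPoly]
  field_simp
  rcases k.eq_zero_or_pos with rfl | hk
  · simp only [CharP.cast_eq_zero, zero_mul, mul_zero, zero_sub, zero_add]; ring
  · rw [← pow_sub_one_mul hk.ne' t]
    ring

theorem continuousOn_potential (k : ℕ) (lam : ℝ) : ContinuousOn (potential k lam) (Iio 1) :=
  continuousOn_of_forall_continuousAt fun _ ht => (hasDerivAt_potential k lam ht).continuousAt

theorem strictAntiOn_potential {k : ℕ} {lam : ℝ} {D : Set ℝ} (hD : Convex ℝ D) (hD1 : D ⊆ Iio 1)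
    (hneg : ∀ t ∈ interior D, criticalPoly k lam t < 0) : StrictAntiOn (potential k lam) D := by
  refine strictAntiOn_of_deriv_neg hD ((continuousOn_potential k lam).mono hD1) fun t ht => ?_
  rw [(hasDerivAt_potential k lam (hD1 (interior_subset ht))).deriv]
  exact div_neg_of_neg_of_pos (hneg t ht) (sub_pos.2 (hD1 (interior_subset ht)))

theorem strictMonoOn_potential {k : ℕ} {lam : ℝ} {D : Set ℝ} (hD : Convex ℝ D) (hD1 : D ⊆ Iio 1)
    (hpos : ∀ t ∈ interior D, 0 < criticalPoly k lam t) : StrictMonoOn (potential k lam) D := by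
  refine strictMonoOn_of_deriv_pos hD ((continuousOn_potential k lam).mono hD1) fun t ht => ?_
  rw [(hasDerivAt_potential k lam (hD1 (interior_subset ht))).deriv]
  exact div_pos (hpos t ht) (sub_pos.2 (hD1 (interior_subset ht)))

theorem criticalPoly_eq_mul_bump (n : ℕ) (lam q : ℝ) :
    criticalPoly (n + 2) lam q = q * (lam ^ 2 * (n + 2 : ℕ) * bump n q - 1) := by
  rw [criticalPoly, bump, show n + 2 - 1 = n + 1 from rfl]
  ring

theorem one_lt_mul_bump_of_sqrt_lt {n : ℕ} {lam : ℝ}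
    (hlam : √((((n + 3 : ℕ) : ℝ) - 1) ^ (n + 3 - 1) /
      (((n + 3 : ℕ) : ℝ) * (((n + 3 : ℕ) : ℝ) - 2) ^ (n + 3 - 2))) < lam) :
    1 < lam ^ 2 * (n + 3 : ℕ) * bump (n + 1) ((n + 1) / (n + 2)) := by
  have hlam' := (Real.sqrt_lt' ((Real.sqrt_nonneg _).trans_lt hlam)).1 hlam
  have hbump := bump_div_succ (n + 1)
  push_cast at hlam' hbump ⊢
  rw [show (n : ℝ) + 3 - 1 = n + 2 by ring, show (n : ℝ) + 3 - 2 = n + 1 by ring,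
    div_lt_iff₀ (by positivity)] at hlam'
  rw [show (n : ℝ) + 1 + 1 = n + 2 by ring] at hbump
  rw [hbump, mul_div_assoc', lt_div_iff₀ (by positivity), one_mul]
  convert hlam' using 1; ring

theorem exists_criticalPoly_sign_changes {k : ℕ} (hk : 3 ≤ k) {lam : ℝ}
    (hlam : √((((k : ℝ) - 1) ^ (k - 1) / ((k : ℝ) * ((k : ℝ) - 2) ^ (k - 2)))) < lam) :
    ∃ qu qs : ℝ, qu ∈ Ioo 0 1 ∧ qs ∈ Ioo 0 1 ∧ qu < qs ∧
      criticalPoly k lam qu = 0 ∧ criticalPoly k lam qs = 0 ∧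
      (∀ t ∈ Ioo 0 qu, criticalPoly k lam t < 0) ∧ (∀ t ∈ Ioo qu qs, 0 < criticalPoly k lam t) ∧
      (∀ t ∈ Ioo qs 1, criticalPoly k lam t < 0) := by
  obtain ⟨n, rfl⟩ : ∃ n, k = n + 3 := ⟨k - 3, by omega⟩
  set c : ℝ := lam ^ 2 * (n + 3 : ℕ)
  have hc : 1 < c * bump (n + 1) ((n + 1) / (n + 2)) := one_lt_mul_bump_of_sqrt_lt hlam
  have hc0 : 0 < c := by
    have : 0 < lam := (Real.sqrt_nonneg _).trans_lt hlam
    positivity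
  have hm1 : ((n : ℝ) + 1) / (n + 2) < 1 := (div_lt_one (by positivity)).2 (by linarith)
  -- The zeros of `criticalPoly` in `(0, 1)` are where the bump crosses the level `1 / c`.
  have hpoly (t : ℝ) : criticalPoly (n + 3) lam t = t * c * (bump (n + 1) t - 1 / c) := by
    rw [criticalPoly_eq_mul_bump (n + 1), mul_assoc t, mul_sub c, mul_one_div_cancel hc0.ne']
  obtain ⟨qu, qs, hqu, hqs, hu, hs, hneg₁, hpos, hneg₂⟩ :=
    exists_levelSet_of_unimodal (y := 1 / c) (by positivity) hm1.le
      (continuous_bump _).continuousOn (strictMonoOn_bump_succ n)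
      ((strictAntiOn_bump_succ n).mono Icc_subset_Ici_self)
      (by simp [bump]; positivity) (by rwa [div_lt_iff₀' hc0]) (by simp [bump]; positivity)
  have hqu0 : 0 < qu := hqu.1
  refine ⟨qu, qs, ⟨hqu0, hqu.2.trans hm1⟩, ⟨hqu0.trans (hqu.2.trans hqs.1), hqs.2⟩,
    hqu.2.trans hqs.1, by rw [hpoly, hu, sub_self, mul_zero], by rw [hpoly, hs, sub_self, mul_zero],
    fun t ht => ?_, fun t ht => ?_, fun t ht => ?_⟩ <;> rw [hpoly]
  · exact mul_neg_of_pos_of_neg (mul_pos ht.1 hc0) (sub_neg.2 (hneg₁ t ht))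
  · exact mul_pos (mul_pos (hqu0.trans ht.1) hc0) (sub_pos.2 (hpos t ht))
  · exact mul_neg_of_pos_of_neg (mul_pos (hqu0.trans (hqu.2.trans (hqs.1.trans ht.1))) hc0)
      (sub_neg.2 (hneg₂ t ht))

theorem stmt_5 (k : ℕ) (hk : 3 ≤ k) (lam : ℝ)
    (hlam : Real.sqrt (((k : ℝ) - 1) ^ (k - 1) / ((k : ℝ) * ((k : ℝ) - 2) ^ (k - 2))) < lam)
    (f h : ℝ → ℝ)
    (hf : f = fun t : ℝ => lam ^ 2 * t ^ k + Real.log (1 - t) + t)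
    (hh : h = fun q : ℝ => lam ^ 2 * k * q ^ (k - 1) - lam ^ 2 * k * q ^ k - q) :
    ∃ qu qs : ℝ, qu ∈ Set.Ioo (0 : ℝ) 1 ∧ qs ∈ Set.Ioo (0 : ℝ) 1 ∧ qu < qs ∧
      h qu = 0 ∧ h qs = 0 ∧
      (∃ ε > (0 : ℝ), ∀ t : ℝ, |t - qu| < ε → t ≠ qu → f qu < f t) ∧
      (∃ ε > (0 : ℝ), ∀ t : ℝ, |t - qs| < ε → t ≠ qs → f t < f qs) ∧
      StrictAntiOn f (Set.Ioo 0 qu) ∧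
      StrictMonoOn f (Set.Ioo qu qs) ∧
      StrictAntiOn f (Set.Ioo qs 1) := by
  subst hf hh
  obtain ⟨qu, qs, hqu, hqs, hlt, hu, hs, hneg₁, hpos, hneg₂⟩ :=
    exists_criticalPoly_sign_changes hk hlam
  have anti₁ : StrictAntiOn (potential k lam) (Icc 0 qu) :=
    strictAntiOn_potential (convex_Icc _ _) (fun _ ht => ht.2.trans_lt hqu.2) (by rwa [interior_Icc])
  have mono : StrictMonoOn (potential k lam) (Icc qu qs) :=
    strictMonoOn_potential (convex_Icc _ _) (fun _ ht => ht.2.trans_lt hqs.2) (by rwa [interior_Icc])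
  have anti₂ : StrictAntiOn (potential k lam) (Ico qs 1) :=
    strictAntiOn_potential (convex_Ico _ _) (fun _ ht => ht.2) (by rwa [interior_Ico])
  refine ⟨qu, qs, hqu, hqs, hlt, hu, hs, ?_, ?_, anti₁.mono Ioo_subset_Icc_self,
    mono.mono Ioo_subset_Icc_self, anti₂.mono Ioo_subset_Ico_self⟩
  · exact exists_forall_lt_of_strictAntiOn_of_strictMonoOn hqu.1 hlt
      (anti₁.mono Ioc_subset_Icc_self) (mono.mono Ico_subset_Icc_self)
  · exact exists_forall_lt_of_strictMonoOn_of_strictAntiOn hlt hqs.2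
      (mono.mono Ioc_subset_Icc_self) anti₂
end

section
/- For all λ > 0, the maximum of φ_λ over [0,1] equals the supremum of f_λ over [0,1), where φ_λ(q) = λ²k q^{k-1} - log(1 + λ²k q^{k-1}) - λ²(k-1)q^k and f_λ(q) = λ²q^k + log(1-q) + q. -/
/-!
Put `a = λ² k q^{k-1}`, so that `a q = λ² k q^k`. The bound `log x ≤ x - 1` at `x = (1 - q)(1 + a)`
reads `log (1 - q) + (1 + a) q ≤ a - log (1 + a)`, with equality at `q = a / (1 + a)`. The
inequality gives `f_λ ≤ φ_λ` pointwise on `[0,1)`. Conversely, evaluating `f_λ` at the equality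
point `r = a / (1 + a)` and bounding `r^k` below by the tangent line of `x ↦ x^k` at `q` gives
`φ_λ(q) ≤ f_λ(r)`. Hence the maximum of the continuous function `φ_λ` on `[0,1]` is attained by
`f_λ` on `[0,1)` and bounds `f_λ` there.
-/

open Real Set

theorem pow_add_mul_pow_pred_mul_sub_le_pow {q r : ℝ} (hq : 0 ≤ q) (hr : 0 ≤ r) :
    ∀ k : ℕ, q ^ k + k * q ^ (k - 1) * (r - q) ≤ r ^ k
  | 0 => by simp
  | 1 => by simp
  | k + 2 => by
    have ih := pow_add_mul_pow_pred_mul_sub_le_pow hq hr (k + 1)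
    have hsq : 0 ≤ ((k : ℝ) + 1) * q ^ k * (r - q) ^ 2 := by positivity
    rw [show k + 2 - 1 = k + 1 from rfl, pow_succ r (k + 1)]
    push_cast at ih ⊢
    linear_combination r * ih + hsq

theorem cast_mul_pow_pred_mul_self (k : ℕ) (q : ℝ) : k * q ^ (k - 1) * q = k * q ^ k := by
  cases k with
  | zero => simp
  | succ k => simp [pow_succ, mul_assoc]

theorem log_one_sub_add_one_add_mul_le {q a : ℝ} (hq : q < 1) (ha : -1 < a) :
    log (1 - q) + (1 + a) * q ≤ a - log (1 + a) := by
  have h := log_le_sub_one_of_pos (mul_pos (sub_pos.2 hq) (neg_lt_iff_pos_add'.1 ha))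
  rw [log_mul (sub_pos.2 hq).ne' (by linarith)] at h
  linarith

theorem log_one_sub_div_add_one_add_mul_div {a : ℝ} (ha : -1 < a) :
    log (1 - a / (1 + a)) + (1 + a) * (a / (1 + a)) = a - log (1 + a) := by
  have ha' : 1 + a ≠ 0 := by linarith
  rw [one_sub_div ha', add_sub_cancel_right, one_div, log_inv, mul_div_cancel₀ a ha']
  ring

noncomputable def fLam (k : ℕ) (lam q : ℝ) : ℝ :=
  lam ^ 2 * q ^ k + log (1 - q) + q

noncomputable def phiLam (k : ℕ) (lam q : ℝ) : ℝ :=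
  lam ^ 2 * k * q ^ (k - 1) - log (1 + lam ^ 2 * k * q ^ (k - 1)) - lam ^ 2 * ((k : ℝ) - 1) * q ^ k

theorem fLam_le_phiLam (k : ℕ) (lam : ℝ) {q : ℝ} (hq₀ : 0 ≤ q) (hq₁ : q < 1) :
    fLam k lam q ≤ phiLam k lam q := by
  have ha : -1 < lam ^ 2 * k * q ^ (k - 1) := neg_one_lt_zero.trans_le (by positivity)
  have h := log_one_sub_add_one_add_mul_le hq₁ ha
  have hmul := cast_mul_pow_pred_mul_self k q
  unfold fLam phiLam
  linear_combination h - lam ^ 2 * hmul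

theorem exists_phiLam_le_fLam (k : ℕ) (lam : ℝ) {q : ℝ} (hq : 0 ≤ q) :
    ∃ r ∈ Ico (0 : ℝ) 1, phiLam k lam q ≤ fLam k lam r := by
  set a := lam ^ 2 * k * q ^ (k - 1)
  have ha : 0 ≤ a := by positivity
  have ha₁ : 0 < 1 + a := by linarith
  set r := a / (1 + a)
  have hr : 0 ≤ r := by positivity
  refine ⟨r, ⟨hr, (div_lt_one ha₁).2 (by linarith)⟩, ?_⟩
  have heq := log_one_sub_div_add_one_add_mul_div (a := a) (by linarith)
  have htangent := pow_add_mul_pow_pred_mul_sub_le_pow hq hr k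
  have hmul := cast_mul_pow_pred_mul_self k q
  unfold fLam phiLam
  linear_combination lam ^ 2 * htangent - heq + lam ^ 2 * hmul

theorem continuousOn_phiLam (k : ℕ) (lam : ℝ) : ContinuousOn (phiLam k lam) (Icc 0 1) := by
  refine ContinuousOn.sub (ContinuousOn.sub (by fun_prop) (ContinuousOn.log (by fun_prop) ?_))
    (by fun_prop)
  rintro q ⟨hq, -⟩
  have : 0 ≤ lam ^ 2 * k * q ^ (k - 1) := by positivity
  positivity

theorem stmt_9_general (k : ℕ) (lam : ℝ)
    (f phi : ℝ → ℝ)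
    (hf : f = fun q : ℝ => lam ^ 2 * q ^ k + Real.log (1 - q) + q)
    (hphi : phi = fun q : ℝ =>
      lam ^ 2 * k * q ^ (k - 1) - Real.log (1 + lam ^ 2 * k * q ^ (k - 1))
        - lam ^ 2 * ((k : ℝ) - 1) * q ^ k) :
    ∃ q ∈ Set.Icc (0 : ℝ) 1, IsMaxOn phi (Set.Icc (0 : ℝ) 1) q ∧
      phi q = sSup (f '' Set.Ico (0 : ℝ) 1) := by
  obtain rfl : f = fLam k lam := hf
  obtain rfl : phi = phiLam k lam := hphi
  obtain ⟨q, hq, hmax⟩ :=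
    isCompact_Icc.exists_isMaxOn (nonempty_Icc.2 zero_le_one) (continuousOn_phiLam k lam)
  have hbound : ∀ r ∈ Ico (0 : ℝ) 1, fLam k lam r ≤ phiLam k lam q := fun r hr =>
    (fLam_le_phiLam k lam hr.1 hr.2).trans (hmax (Ico_subset_Icc_self hr))
  obtain ⟨r, hr, hle⟩ := exists_phiLam_le_fLam k lam hq.1
  have hgreatest : IsGreatest (fLam k lam '' Ico 0 1) (phiLam k lam q) := by
    refine ⟨?_, forall_mem_image.2 hbound⟩
    rw [← le_antisymm (hbound r hr) hle]
    exact mem_image_of_mem _ hr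
  exact ⟨q, hq, hmax, hgreatest.csSup_eq.symm⟩

theorem stmt_9 (k : ℕ) (hk : 3 ≤ k) (lam : ℝ) (hlam : 0 < lam)
    (f phi : ℝ → ℝ)
    (hf : f = fun q : ℝ => lam ^ 2 * q ^ k + Real.log (1 - q) + q)
    (hphi : phi = fun q : ℝ =>
      lam ^ 2 * k * q ^ (k - 1) - Real.log (1 + lam ^ 2 * k * q ^ (k - 1))
        - lam ^ 2 * ((k : ℝ) - 1) * q ^ k) :
    ∃ q ∈ Set.Icc (0 : ℝ) 1, IsMaxOn phi (Set.Icc (0 : ℝ) 1) q ∧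
      phi q = sSup (f '' Set.Ico (0 : ℝ) 1) :=
  stmt_9_general k lam f phi hf hphi
end

section
/- The function φ_k(z) = ((1+z)/z²)·log(1+z) - 1/z - 1/k has a unique zero on (0,∞). -/
/-!
Writing the function as `((1 + z) log (1 + z) - z) / z²`, its derivative is
`(2z - (2 + z) log (1 + z)) / z³`, which is negative by the bound `log (1 + z) > 2z / (2 + z)`;
so it is strictly decreasing on `(0, ∞)`. The same bound shows that it exceeds `1 / (2 + z)`,
hence `c` at `z = 1/c - 2`, while it tends to `0` at infinity. For `0 < c < 1/2`, in particular
for `c = 1/k` with `k ≥ 3`, the intermediate value theorem gives exactly one solution.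
-/

open Real Set Filter Topology

/-- Bennett's function `(1 + z) log (1 + z) - z`, divided by `z²`. -/
noncomputable def bennettRatio (z : ℝ) : ℝ := (1 + z) / z ^ 2 * log (1 + z) - 1 / z

lemma hasDerivAt_bennettRatio {z : ℝ} (hz : 0 < z) :
    HasDerivAt bennettRatio ((2 * z - (2 + z) * log (1 + z)) / z ^ 3) z := by
  have hz0 : z ≠ 0 := hz.ne'
  have h1z : 1 + z ≠ 0 := by positivity
  have hA : HasDerivAt (fun y : ℝ => 1 + y) 1 z := (hasDerivAt_id z).const_add 1
  have hQ : HasDerivAt (fun y : ℝ => (1 + y) / y ^ 2) _ z :=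
    hA.div (hasDerivAt_pow 2 z) (pow_ne_zero 2 hz0)
  have hI : HasDerivAt (fun y : ℝ => 1 / y) (-(z ^ 2)⁻¹) z := by
    simpa only [one_div] using hasDerivAt_inv hz0
  refine ((hQ.mul (hA.log h1z)).sub hI).congr_deriv ?_
  field_simp
  ring

lemma bennettRatio_deriv_neg {z : ℝ} (hz : 0 < z) :
    (2 * z - (2 + z) * log (1 + z)) / z ^ 3 < 0 := by
  have hlog := lt_log_one_add_of_pos hz
  rw [div_lt_iff₀ (by positivity)] at hlog
  exact div_neg_of_neg_of_pos (by linarith) (by positivity)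

lemma strictAntiOn_bennettRatio : StrictAntiOn bennettRatio (Ioi 0) :=
  strictAntiOn_of_hasDerivWithinAt_neg (convex_Ioi 0)
    (fun _ hx => (hasDerivAt_bennettRatio hx).continuousAt.continuousWithinAt)
    (fun _ hx => (hasDerivAt_bennettRatio (interior_subset hx)).hasDerivWithinAt)
    (fun _ hx => bennettRatio_deriv_neg (interior_subset hx))

lemma inv_two_add_lt_bennettRatio {z : ℝ} (hz : 0 < z) : (2 + z)⁻¹ < bennettRatio z := by
  have hlog := lt_log_one_add_of_pos hz
  rw [div_lt_iff₀ (by positivity)] at hlog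
  have hz0 : z ≠ 0 := hz.ne'
  rw [bennettRatio, ← sub_pos]
  field_simp
  nlinarith [mul_lt_mul_of_pos_left hlog (by positivity : 0 < 1 + z)]

lemma tendsto_bennettRatio_atTop : Tendsto bennettRatio atTop (𝓝 0) := by
  have hlog : Tendsto (fun z : ℝ => log (1 + z) / z) atTop (𝓝 0) := by
    have := (tendsto_pow_log_div_mul_add_atTop 1 (-1) 1 one_ne_zero).comp
      (tendsto_atTop_add_const_left atTop 1 tendsto_id)
    simpa [Function.comp_def] using this
  have hinv : Tendsto (fun z : ℝ => 1 + z⁻¹) atTop (𝓝 1) := by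
    simpa using (tendsto_inv_atTop_zero (𝕜 := ℝ)).const_add 1
  have := (hinv.mul hlog).sub tendsto_inv_atTop_zero
  rw [mul_zero, sub_zero] at this
  refine this.congr' ?_
  filter_upwards [eventually_gt_atTop 0] with z hz
  rw [bennettRatio]
  field_simp
  ring

theorem existsUnique_pos_bennettRatio_eq {c : ℝ} (hc0 : 0 < c) (hc : c < 1 / 2) :
    ∃! z : ℝ, 0 < z ∧ bennettRatio z = c := by
  set a := c⁻¹ - 2
  have ha : 0 < a := by
    have : 2 < c⁻¹ := by rw [lt_inv_comm₀ two_pos hc0]; linarith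
    linarith
  have hfa : c < bennettRatio a := by
    simpa [a] using inv_two_add_lt_bennettRatio ha
  obtain ⟨b, hfb, hab⟩ :=
    (((tendsto_order.1 tendsto_bennettRatio_atTop).2 c hc0).and (eventually_gt_atTop a)).exists
  have hcont : ContinuousOn bennettRatio (Icc a b) := fun x hx =>
    (hasDerivAt_bennettRatio (ha.trans_le hx.1)).continuousAt.continuousWithinAt
  obtain ⟨z, hz, hfz⟩ := intermediate_value_Icc' hab.le hcont ⟨hfb.le, hfa.le⟩
  have hz0 : 0 < z := ha.trans_le hz.1
  refine ⟨z, ⟨hz0, hfz⟩, fun y ⟨hy0, hfy⟩ => ?_⟩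
  exact strictAntiOn_bennettRatio.injOn hy0 hz0 (hfy.trans hfz.symm)

theorem stmt_11 (k : ℕ) (hk : 3 ≤ k) :
    ∃! z : ℝ, 0 < z ∧
      (1 + z) / z ^ 2 * Real.log (1 + z) - 1 / z - 1 / (k : ℝ) = 0 := by
  have hk3 : (3 : ℝ) ≤ k := by exact_mod_cast hk
  have hinv : 1 / (k : ℝ) < 1 / 2 := one_div_lt_one_div_of_lt two_pos (by linarith)
  simpa only [bennettRatio, sub_eq_zero] using
    existsUnique_pos_bennettRatio_eq (by positivity) hinv
end
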